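/- arXiv:0804.2564 — 3 statements merged into one kernel-verified Lean document; each statement's English description precedes it below -/
import Mathlib

section
/- The Stokes multipliers s₁ = (e^{(Θ∞-Θ)πi} - e^{-(Θ∞-Θ)πi})e^{Θ∞πi}, s₂ = e^{-Θπi}, s₃ = -(e^{(Θ∞+Θ)πi} - e^{-(Θ∞+Θ)πi})e^{-Θ∞πi}, s₄ = -e^{(2Θ∞+Θ)πi} satisfy the cyclic relation (1 + s₂s₃)e^{2πiΘ∞} + [s₁s₄ + (1 + s₃s₄)(1 + s₁s₂)]e^{-2πiΘ∞} = 2cos(2πΘ) for all real Θ, Θ∞. -/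
/-!
With `a = e^{πiΘ}` and `b = e^{πiΘ∞}` the multipliers become Laurent monomials in `a` and `b`:
`s₁ = b²/a - a`, `s₂ = a⁻¹`, `s₃ = (ab²)⁻¹ - a`, `s₄ = -ab²`. Then `1 + s₂s₃ = (ab)⁻²`,
`1 + s₃s₄ = a²b²`, `1 + s₁s₂ = b²/a²` and `s₁s₄ = a²b² - b⁴`, so the left-hand side collapses to
`a⁻² + a² = 2 cos 2πΘ`.
-/

open Complex

theorem stokes_cyclic_relation_of_ne_zero {K : Type*} [Field K] {a b : K} (ha : a ≠ 0)
    (hb : b ≠ 0) :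
    let s₁ := (b / a - (b / a)⁻¹) * b
    let s₂ := a⁻¹
    let s₃ := -(b * a - (b * a)⁻¹) * b⁻¹
    let s₄ := -(b ^ 2 * a)
    (1 + s₂ * s₃) * b ^ 2 + (s₁ * s₄ + (1 + s₃ * s₄) * (1 + s₁ * s₂)) * (b ^ 2)⁻¹ =
      a ^ 2 + (a ^ 2)⁻¹ := by
  intro s₁ s₂ s₃ s₄
  have h₂₃ : 1 + s₂ * s₃ = ((a * b) ^ 2)⁻¹ := by simp only [s₂, s₃]; field_simp; ring
  have h₃₄ : 1 + s₃ * s₄ = (a * b) ^ 2 := by simp only [s₃, s₄]; field_simp; ring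
  have h₁₂ : 1 + s₁ * s₂ = b ^ 2 / a ^ 2 := by simp only [s₁, s₂]; field_simp; ring
  have h₁₄ : s₁ * s₄ = (a * b) ^ 2 - b ^ 4 := by simp only [s₁, s₄]; field_simp; ring
  rw [h₂₃, h₃₄, h₁₂, h₁₄]
  field_simp
  ring

noncomputable def expPiI (t : ℝ) : ℂ := exp (t * Real.pi * I)

theorem expPiI_ne_zero (t : ℝ) : expPiI t ≠ 0 := exp_ne_zero _

theorem expPiI_add (s t : ℝ) : expPiI (s + t) = expPiI s * expPiI t := by
  simp only [expPiI, ofReal_add, add_mul, exp_add]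

theorem expPiI_neg (t : ℝ) : expPiI (-t) = (expPiI t)⁻¹ := by
  simp only [expPiI, ofReal_neg, neg_mul, exp_neg]

theorem expPiI_sub (s t : ℝ) : expPiI (s - t) = expPiI s / expPiI t := by
  rw [sub_eq_add_neg, expPiI_add, expPiI_neg, div_eq_mul_inv]

theorem expPiI_two_mul (t : ℝ) : expPiI (2 * t) = expPiI t ^ 2 := by
  rw [two_mul, expPiI_add, sq]

theorem two_mul_cos_two_pi_mul (t : ℝ) :
    2 * cos (2 * Real.pi * t) = expPiI t ^ 2 + (expPiI t ^ 2)⁻¹ := by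
  rw [← expPiI_two_mul, ← expPiI_neg, two_cos]
  simp only [expPiI]
  push_cast
  ring_nf

theorem stokes_cyclic_relation (Θ Θinf : ℝ) :
    let E : ℝ → ℂ := fun t => Complex.exp ((t : ℂ) * (Real.pi : ℂ) * Complex.I)
    let s₁ : ℂ := (E (Θinf - Θ) - E (-(Θinf - Θ))) * E Θinf
    let s₂ : ℂ := E (-Θ)
    let s₃ : ℂ := -(E (Θinf + Θ) - E (-(Θinf + Θ))) * E (-Θinf)
    let s₄ : ℂ := -E (2 * Θinf + Θ)
    (1 + s₂ * s₃) * Complex.exp (2 * (Real.pi : ℂ) * Complex.I * (Θinf : ℂ)) +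
      (s₁ * s₄ + (1 + s₃ * s₄) * (1 + s₁ * s₂)) *
        Complex.exp (-(2 * (Real.pi : ℂ) * Complex.I * (Θinf : ℂ))) =
    2 * Complex.cos (2 * (Real.pi : ℂ) * (Θ : ℂ)) := by
  intro E s₁ s₂ s₃ s₄
  have hE : E = expPiI := rfl
  have hsq : exp (2 * Real.pi * I * Θinf) = expPiI Θinf ^ 2 := by
    rw [← expPiI_two_mul, expPiI]
    push_cast
    ring_nf
  rw [exp_neg, hsq, two_mul_cos_two_pi_mul]
  simp only [s₁, s₂, s₃, s₄, hE, expPiI_add, expPiI_neg, expPiI_sub, expPiI_two_mul]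
  exact stokes_cyclic_relation_of_ne_zero (expPiI_ne_zero Θ) (expPiI_ne_zero Θinf)
end

section
/- With Θ = -b, Θ∞ = ν + b, the specific Stokes multipliers s₁ = e^{(2ν+3b)πi} - e^{-bπi}, s₂ = e^{bπi}, s₃ = e^{-(2ν+b)πi} - e^{-bπi}, s₄ = -e^{(2ν+b)πi} satisfy (1 + s₂s₃)e^{2πiΘ∞} + [s₁s₄ + (1 + s₃s₄)(1 + s₁s₂)]e^{-2πiΘ∞} = 2cos(2πΘ). -/
/-!
Put `p = e^{πiν}` and `q = e^{πib}`. Every exponential in the statement is a monomial `p^m q^n`,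
and the Stokes multipliers become `s₁ = p²q³ - q⁻¹`, `s₂ = q`, `s₃ = p⁻²q⁻¹ - q⁻¹`, `s₄ = -p²q`.
The two coefficients then collapse to monomials, `1 + s₂s₃ = p⁻²` and
`s₁s₄ + (1 + s₃s₄)(1 + s₁s₂) = p²`, so against `e^{±2πiΘ∞} = (pq)^{±2}` the left-hand side is
`q² + q⁻² = 2cos(2πb)`.
-/

open Complex

theorem exp_mul_pi_mul_I_eq_zpow_mul_zpow {t x y : ℝ} (m n : ℤ) (ht : t = m * x + n * y) :
    exp (t * Real.pi * I) = exp (x * Real.pi * I) ^ m * exp (y * Real.pi * I) ^ n := by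
  rw [← exp_int_mul, ← exp_int_mul, ← exp_add, ht]
  push_cast
  ring_nf

namespace SpecialStokes

variable {K : Type*} [Field K] (p q : K)

def s₁ : K := p ^ 2 * q ^ 3 - q⁻¹

def s₃ : K := p⁻¹ ^ 2 * q⁻¹ - q⁻¹

def s₄ : K := -(p ^ 2 * q)

variable {p q}

theorem one_add_mul_s₃ (hq : q ≠ 0) : 1 + q * s₃ p q = p⁻¹ ^ 2 := by
  simp only [s₃]
  field_simp
  ring

theorem s₁_mul_s₄_add_one_add_s₃_mul_s₄_mul_one_add_s₁_mul (hp : p ≠ 0) (hq : q ≠ 0) :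
    s₁ p q * s₄ p q + (1 + s₃ p q * s₄ p q) * (1 + s₁ p q * q) = p ^ 2 := by
  simp only [s₁, s₃, s₄]
  field_simp
  ring

theorem monodromy_relation (hp : p ≠ 0) (hq : q ≠ 0) :
    (1 + q * s₃ p q) * (p ^ 2 * q ^ 2) +
        (s₁ p q * s₄ p q + (1 + s₃ p q * s₄ p q) * (1 + s₁ p q * q)) * (p ^ 2 * q ^ 2)⁻¹ =
      q⁻¹ ^ 2 + q ^ 2 := by
  rw [one_add_mul_s₃ hq, s₁_mul_s₄_add_one_add_s₃_mul_s₄_mul_one_add_s₁_mul hp hq]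
  field_simp
  ring

end SpecialStokes

theorem special_stokes_satisfy_relation (b ν : ℝ) :
    let E : ℝ → ℂ := fun t => Complex.exp ((t : ℂ) * (Real.pi : ℂ) * Complex.I)
    let Θ : ℝ := -b
    let Θinf : ℝ := ν + b
    let s₁ : ℂ := E (2 * ν + 3 * b) - E (-b)
    let s₂ : ℂ := E b
    let s₃ : ℂ := E (-(2 * ν + b)) - E (-b)
    let s₄ : ℂ := -E (2 * ν + b)
    (1 + s₂ * s₃) * Complex.exp (2 * (Real.pi : ℂ) * Complex.I * (Θinf : ℂ)) +
      (s₁ * s₄ + (1 + s₃ * s₄) * (1 + s₁ * s₂)) *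
        Complex.exp (-(2 * (Real.pi : ℂ) * Complex.I * (Θinf : ℂ))) =
    2 * Complex.cos (2 * (Real.pi : ℂ) * (Θ : ℂ)) := by
  intro E Θ Θinf s₁ s₂ s₃ s₄
  have hE₁ : E (2 * ν + 3 * b) = E ν ^ 2 * E b ^ 3 := by
    simpa using exp_mul_pi_mul_I_eq_zpow_mul_zpow 2 3 (by push_cast; ring)
  have hE₃ : E (-(2 * ν + b)) = (E ν)⁻¹ ^ 2 * (E b)⁻¹ := by
    simpa using exp_mul_pi_mul_I_eq_zpow_mul_zpow (-2) (-1) (by push_cast; ring)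
  have hE₄ : E (2 * ν + b) = E ν ^ 2 * E b := by
    simpa using exp_mul_pi_mul_I_eq_zpow_mul_zpow 2 1 (by push_cast; ring)
  have hE₀ : E (-b) = (E b)⁻¹ := by
    simpa using exp_mul_pi_mul_I_eq_zpow_mul_zpow (x := ν) 0 (-1) (by push_cast; ring)
  have hΘinf : exp (2 * Real.pi * I * Θinf) = E ν ^ 2 * E b ^ 2 :=
    calc exp (2 * Real.pi * I * Θinf) = E (2 * ν + 2 * b) := by
          simp only [E, Θinf]; push_cast; ring_nf
      _ = E ν ^ 2 * E b ^ 2 := by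
          simpa using exp_mul_pi_mul_I_eq_zpow_mul_zpow 2 2 (by push_cast; ring)
  have hcos : 2 * cos (2 * Real.pi * Θ) = (E b)⁻¹ ^ 2 + E b ^ 2 :=
    calc 2 * cos (2 * Real.pi * Θ) = E (-(2 * b)) + E (2 * b) := by
          rw [two_cos]; simp only [E, Θ]; push_cast; ring_nf
      _ = (E b)⁻¹ ^ 2 + E b ^ 2 := by
          congr 1
          · simpa using exp_mul_pi_mul_I_eq_zpow_mul_zpow (x := ν) 0 (-2) (by push_cast; ring)
          · simpa using exp_mul_pi_mul_I_eq_zpow_mul_zpow (x := ν) 0 2 (by push_cast; ring)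
  rw [exp_neg, hΘinf, hcos]
  simp only [s₁, s₂, s₃, s₄, hE₁, hE₃, hE₄, hE₀]
  exact SpecialStokes.monodromy_relation (exp_ne_zero _) (exp_ne_zero _)
end

section
/- As n → ∞, φ_n(z) := (1/2)∫_{β_{1,n}}^z (R_n(s)/s) ds converges to (1/2)(z - 1 - log z) uniformly on compact subsets of ℂ \ ((-∞,0] ∪ {0}), where R_n(z) = √((z-β_{1,n})(z-β_{2,n})) with R_n(z) ~ z at ∞, β_{1,n} = 1 + ν/n - 2√(ν/n), β_{2,n} = 1 + ν/n + 2√(ν/n), and ν > 0 is fixed. -/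
open Filter Topology

/-!
Write `t = √(ν / n)`, so that `β₁ = (1 - t)²` and `β₂ = (1 + t)²`. Then
`(R - (z - 1)) (R + (z - 1)) = R² - (z - 1)² = t² (t² - 2 - 2z)` is `O(t²)` on bounded sets.
Outside the disc of radius `4t` about `1`, which contains the cut, the two factors never have
equal modulus, and since `R(x) ~ x` at `+∞` the small one is `R - (z - 1)` throughout this
connected region; inside the disc both `R` and `z - 1` are `O(t)`. Hence `R(s) - (s - 1) = O(t)`
on bounded sets, i.e. `φₙ' - ψ' = O(t / |s|)` for `ψ z = (z - 1 - log z) / 2`. Integrating along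
the segment from a real point `wₙ` just below `β₁`, where `φₙ` is small and `ψ(wₙ) → ψ(1) = 0`,
to `z ∈ K` gives the uniform bound.
-/

open Metric Complex Set

theorem IsPreconnected.forall_lt_of_forall_ne {X α : Type*} [TopologicalSpace X] [LinearOrder α]
    [TopologicalSpace α] [OrderClosedTopology α] {s : Set X} (hs : IsPreconnected s)
    {f g : X → α} (hf : ContinuousOn f s) (hg : ContinuousOn g s) (hne : ∀ x ∈ s, f x ≠ g x)
    {a : X} (ha : a ∈ s) (hlt : f a < g a) {x : X} (hx : x ∈ s) : f x < g x := by
  by_contra! hle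
  obtain ⟨y, hy, hfg⟩ := hs.intermediate_value₂ ha hx hf hg hlt.le hle
  exact hne y hy hfg

theorem isPreconnected_compl_closedBall {E : Type*} [NormedAddCommGroup E] [NormedSpace ℝ E]
    (h : 1 < Module.rank ℝ E) (c : E) {r : ℝ} (hr : 0 ≤ r) : IsPreconnected (closedBall c r)ᶜ := by
  have hcompl : (closedBall c r)ᶜ = (fun p : ℝ × E ↦ c + p.1 • p.2) '' (Ioi r ×ˢ sphere 0 1) := by
    ext z
    simp only [mem_compl_iff, mem_closedBall, not_le, dist_eq_norm, mem_image, mem_prod, mem_Ioi,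
      mem_sphere_iff_norm, sub_zero, Prod.exists]
    constructor
    · intro hz
      have hz0 : ‖z - c‖ ≠ 0 := (hr.trans_lt hz).ne'
      refine ⟨‖z - c‖, ‖z - c‖⁻¹ • (z - c), ⟨hz, ?_⟩, ?_⟩
      · rw [norm_smul, norm_inv, norm_norm, inv_mul_cancel₀ hz0]
      · rw [smul_smul, mul_inv_cancel₀ hz0, one_smul, add_sub_cancel]
    · rintro ⟨a, u, ⟨ha, hu⟩, rfl⟩
      rwa [add_sub_cancel_left, norm_smul, hu, mul_one, Real.norm_of_nonneg (hr.trans ha.le)]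
  rw [hcompl]
  exact (isPreconnected_Ioi.prod (isPreconnected_sphere h 0 1)).image _ (by fun_prop)

theorem tendstoUniformlyOn_of_eventually_dist_le {ι α β : Type*} [PseudoMetricSpace β]
    {l : Filter ι} {F : ι → α → β} {f : α → β} {s : Set α} {b : ι → ℝ}
    (hb : Tendsto b l (𝓝 0)) (h : ∀ᶠ i in l, ∀ x ∈ s, dist (f x) (F i x) ≤ b i) :
    TendstoUniformlyOn F f l s := by
  rw [Metric.tendstoUniformlyOn_iff]
  intro ε hε
  filter_upwards [h, hb.eventually (gt_mem_nhds hε)] with i hi hbi x hx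
  exact (hi x hx).trans_lt hbi

theorem IsCompact.exists_pos_forall_le_norm {E : Type*} [NormedAddCommGroup E] {T : Set E}
    (hT : IsCompact T) (h0 : 0 ∉ T) : ∃ k > 0, ∀ s ∈ T, k ≤ ‖s‖ := by
  obtain ⟨k, hk, hball⟩ := Metric.isOpen_iff.1 hT.isClosed.isOpen_compl 0 h0
  exact ⟨k, hk, fun s hs ↦ not_lt.1 fun hlt ↦ hball (mem_ball_zero_iff.2 hlt) hs⟩

theorem exists_seq_tendsto_of_tendsto_nhdsLT {E : Type*} [NormedAddCommGroup E]
    {f : ℕ → ℝ → E} {b : ℕ → ℝ} {c : ℝ} (hb : Tendsto b atTop (𝓝 c))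
    (hf : ∀ᶠ n in atTop, Tendsto (f n) (𝓝[<] (b n)) (𝓝 0)) :
    ∃ w : ℕ → ℝ, Tendsto w atTop (𝓝 c) ∧ (∀ᶠ n in atTop, w n < b n) ∧
      Tendsto (fun n ↦ f n (w n)) atTop (𝓝 0) := by
  have hchoice : ∀ n : ℕ, ∃ x, Tendsto (f n) (𝓝[<] (b n)) (𝓝 0) →
      x ∈ Ioo (b n - 1 / (n + 1)) (b n) ∧ ‖f n x‖ < 1 / (n + 1) := by
    intro n
    by_cases hfn : Tendsto (f n) (𝓝[<] (b n)) (𝓝 0)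
    · have hpos : (0 : ℝ) < 1 / (n + 1) := Nat.one_div_pos_of_nat
      obtain ⟨x, hx, hfx⟩ := ((eventually_mem_set.2 (Ioo_mem_nhdsLT (sub_lt_self (b n) hpos))).and
        (hfn.eventually (ball_mem_nhds 0 hpos))).exists
      exact ⟨x, fun _ ↦ ⟨hx, mem_ball_zero_iff.1 hfx⟩⟩
    · exact ⟨0, fun h ↦ absurd h hfn⟩
  choose w hw using hchoice
  have hw' := hf.mono fun n hn ↦ hw n hn
  refine ⟨w, ?_, hw'.mono fun n hn ↦ hn.1.2, ?_⟩
  · have hlo : Tendsto (fun n : ℕ ↦ b n - 1 / ((n : ℝ) + 1)) atTop (𝓝 c) := by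
      simpa using hb.sub tendsto_one_div_add_atTop_nhds_zero_nat
    exact tendsto_of_tendsto_of_tendsto_of_le_of_le' hlo hb (hw'.mono fun n hn ↦ hn.1.1.le)
      (hw'.mono fun n hn ↦ hn.1.2.le)
  · exact squeeze_zero_norm' (hw'.mono fun n hn ↦ hn.2.le) tendsto_one_div_add_atTop_nhds_zero_nat

theorem one_add_sub_two_mul_sqrt {x : ℝ} (hx : 0 ≤ x) : 1 + x - 2 * √x = (1 - √x) ^ 2 := by
  rw [sub_sq, Real.sq_sqrt hx]; ring

theorem one_add_add_two_mul_sqrt {x : ℝ} (hx : 0 ≤ x) : 1 + x + 2 * √x = (1 + √x) ^ 2 := by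
  rw [add_sq, Real.sq_sqrt hx]; ring

def IsSqrtQuadratic (t : ℝ) (R : ℂ → ℂ) : Prop :=
  ∀ z, R z ^ 2 = (z - ((1 - t) ^ 2 : ℝ)) * (z - ((1 + t) ^ 2 : ℝ))

def branchCut (t : ℝ) : Set ℂ := {z | z.im = 0 ∧ (1 - t) ^ 2 ≤ z.re ∧ z.re ≤ (1 + t) ^ 2}

theorem notMem_branchCut_of_four_mul_lt_norm_sub_one {t : ℝ} (ht₀ : 0 ≤ t) (ht₁ : t ≤ 1)
    {z : ℂ} (hz : 4 * t < ‖z - 1‖) : z ∉ branchCut t := by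
  rintro ⟨him, hlo, hhi⟩
  have hz1 : z - 1 = ((z.re - 1 : ℝ) : ℂ) := by apply Complex.ext <;> simp [him]
  rw [hz1, norm_real, Real.norm_eq_abs] at hz
  have : |z.re - 1| ≤ 3 * t := by rw [abs_le]; constructor <;> nlinarith
  linarith

theorem eventually_norm_sub_lt_norm_add {R : ℂ → ℂ}
    (hR : Tendsto (fun x : ℝ ↦ R x / x) atTop (𝓝 1)) :
    ∀ᶠ x : ℝ in atTop, ‖R x - (x - 1)‖ < ‖R x + (x - 1)‖ := by
  have hinv : Tendsto (fun x : ℝ ↦ (x : ℂ)⁻¹) atTop (𝓝 0) := by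
    simpa using (tendsto_inv_atTop_zero (𝕜 := ℝ)).ofReal
  have hsub : Tendsto (fun x : ℝ ↦ ‖R x / x - 1 + (x : ℂ)⁻¹‖) atTop (𝓝 0) := by
    simpa using ((hR.sub_const 1).add hinv).norm
  have hadd : Tendsto (fun x : ℝ ↦ ‖R x / x + 1 - (x : ℂ)⁻¹‖) atTop (𝓝 2) := by
    simpa [one_add_one_eq_two] using ((hR.add_const 1).sub hinv).norm
  filter_upwards [hsub.eventually_lt hadd (by norm_num), eventually_gt_atTop 0] with x hx hx0
  have hx0' : (x : ℂ) ≠ 0 := ofReal_ne_zero.2 hx0.ne'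
  have hdiv : ∀ c : ℂ, ‖c‖ / x = ‖c / x‖ := fun c ↦ by
    rw [norm_div, norm_real, Real.norm_of_nonneg hx0.le]
  rw [← div_lt_div_iff_of_pos_right hx0, hdiv, hdiv]
  convert hx using 2 <;> field_simp <;> ring

namespace IsSqrtQuadratic

variable {t : ℝ} {R : ℂ → ℂ}

theorem sub_mul_add (hR : IsSqrtQuadratic t R) (z : ℂ) :
    (R z - (z - 1)) * (R z + (z - 1)) = t ^ 2 * (t ^ 2 - 2 - 2 * z) := by
  have h := hR z
  push_cast at h
  linear_combination h

theorem norm_sub_mul_norm_add_le (hR : IsSqrtQuadratic t R) (ht₀ : 0 ≤ t) (ht₁ : t ≤ 1)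
    (z : ℂ) :
    ‖R z - (z - 1)‖ * ‖R z + (z - 1)‖ ≤ t ^ 2 * (2 * ‖z‖ + 3) := by
  rw [← norm_mul, hR.sub_mul_add, norm_mul, norm_pow, norm_real, Real.norm_eq_abs, sq_abs]
  gcongr
  calc ‖(t : ℂ) ^ 2 - 2 - 2 * z‖ ≤ ‖(t : ℂ) ^ 2‖ + ‖(2 : ℂ)‖ + ‖2 * z‖ :=
        (norm_sub_le _ _).trans (add_le_add_left (norm_sub_le _ _) _)
    _ ≤ 2 * ‖z‖ + 3 := by
      simp only [norm_pow, norm_real, norm_mul, Real.norm_eq_abs, sq_abs, Complex.norm_ofNat]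
      nlinarith

theorem norm_le_of_norm_sub_one_le (hR : IsSqrtQuadratic t R) (ht₀ : 0 ≤ t) (ht₁ : t ≤ 1)
    {z : ℂ} (hz : ‖z - 1‖ ≤ 4 * t) : ‖R z‖ ≤ 7 * t := by
  have hedge : ∀ β : ℝ, |β - 1| ≤ 3 * t → ‖z - β‖ ≤ 7 * t := fun β hβ ↦ by
    calc ‖z - β‖ = ‖(z - 1) - ((β - 1 : ℝ) : ℂ)‖ := by push_cast; ring_nf
      _ ≤ ‖z - 1‖ + ‖((β - 1 : ℝ) : ℂ)‖ := norm_sub_le _ _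
      _ ≤ 7 * t := by rw [norm_real, Real.norm_eq_abs]; linarith
  have h₁ := hedge ((1 - t) ^ 2) (by rw [abs_le]; constructor <;> nlinarith)
  have h₂ := hedge ((1 + t) ^ 2) (by rw [abs_le]; constructor <;> nlinarith)
  have hsq : ‖R z‖ ^ 2 ≤ (7 * t) ^ 2 := by
    rw [← norm_pow, hR z, norm_mul, sq (7 * t)]
    exact mul_le_mul h₁ h₂ (norm_nonneg _) (by positivity)
  exact (pow_le_pow_iff_left₀ (norm_nonneg _) (by positivity) two_ne_zero).1 hsq

theorem norm_sub_ne_norm_add (hR : IsSqrtQuadratic t R) (ht₀ : 0 ≤ t) (ht₁ : t ≤ 1) {z : ℂ}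
    (hz : 4 * t < ‖z - 1‖) : ‖R z - (z - 1)‖ ≠ ‖R z + (z - 1)‖ := by
  intro heq
  have hge : ‖z - 1‖ ≤ ‖R z - (z - 1)‖ := by
    have h := norm_sub_le (R z + (z - 1)) (R z - (z - 1))
    rw [add_sub_sub_cancel, ← two_mul, norm_mul, Complex.norm_ofNat, ← heq] at h
    linarith
  have hz' : ‖z‖ ≤ ‖z - 1‖ + 1 := by simpa using norm_add_le (z - 1) 1
  have hprod := hR.norm_sub_mul_norm_add_le ht₀ ht₁ z
  rw [← heq] at hprod
  set d := ‖z - 1‖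
  have hd : d * d ≤ t ^ 2 * (2 * d + 5) := by
    nlinarith [mul_le_mul hge hge (norm_nonneg _) (norm_nonneg _),
      mul_le_mul_of_nonneg_left hz' (sq_nonneg t)]
  -- `4t < d` and `t ≤ 1` give `t² (2d + 5) < d² / 2 + 5d² / 16`
  nlinarith [mul_le_mul_of_nonneg_right ht₁ (mul_nonneg ht₀ (norm_nonneg (z - 1))),
    mul_lt_mul_of_pos_right hz ((mul_nonneg (by norm_num) ht₀).trans_lt hz)]

theorem norm_sub_lt_norm_add (hR : IsSqrtQuadratic t R) (ht₀ : 0 ≤ t) (ht₁ : t ≤ 1)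
    (hcont : ∀ z ∉ branchCut t, ContinuousAt R z)
    (hinf : Tendsto (fun x : ℝ ↦ R x / x) atTop (𝓝 1)) {z : ℂ} (hz : 4 * t < ‖z - 1‖) :
    ‖R z - (z - 1)‖ < ‖R z + (z - 1)‖ := by
  have hmem : ∀ z : ℂ, z ∈ (closedBall 1 (4 * t))ᶜ ↔ 4 * t < ‖z - 1‖ := fun z ↦ by
    rw [mem_compl_iff, mem_closedBall, not_le, dist_eq_norm]
  have hRcont : ContinuousOn R (closedBall 1 (4 * t))ᶜ := fun z hz ↦
    (hcont z <| notMem_branchCut_of_four_mul_lt_norm_sub_one ht₀ ht₁ <| (hmem z).1 hz)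
      |>.continuousWithinAt
  obtain ⟨x, hx, hx1⟩ := ((eventually_norm_sub_lt_norm_add hinf).and
    (eventually_gt_atTop (4 * t + 1))).exists
  refine (isPreconnected_compl_closedBall (by simp) 1 (by positivity)).forall_lt_of_forall_ne
    (by fun_prop) (by fun_prop) (fun z hz ↦ hR.norm_sub_ne_norm_add ht₀ ht₁ ((hmem z).1 hz))
    ((hmem x).2 ?_) hx ((hmem z).2 hz)
  rw [← ofReal_one, ← ofReal_sub, norm_real, Real.norm_eq_abs, abs_of_pos (by linarith)]
  linarith

theorem norm_sub_le (hR : IsSqrtQuadratic t R) (ht₀ : 0 ≤ t) (ht₁ : t ≤ 1)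
    (hcont : ∀ z ∉ branchCut t, ContinuousAt R z)
    (hinf : Tendsto (fun x : ℝ ↦ R x / x) atTop (𝓝 1)) {M : ℝ} (hM : 0 ≤ M) {z : ℂ}
    (hz : ‖z‖ ≤ M) : ‖R z - (z - 1)‖ ≤ (M + 11) * t := by
  rcases le_or_gt ‖z - 1‖ (4 * t) with hnear | hfar
  · calc ‖R z - (z - 1)‖ ≤ ‖R z‖ + ‖z - 1‖ := _root_.norm_sub_le _ _
      _ ≤ 7 * t + 4 * t := add_le_add (hR.norm_le_of_norm_sub_one_le ht₀ ht₁ hnear) hnear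
      _ ≤ (M + 11) * t := by nlinarith
  · have hlt := hR.norm_sub_lt_norm_add ht₀ ht₁ hcont hinf hfar
    have hsq : ‖R z - (z - 1)‖ ^ 2 ≤ ((M + 11) * t) ^ 2 := by
      calc ‖R z - (z - 1)‖ ^ 2 ≤ ‖R z - (z - 1)‖ * ‖R z + (z - 1)‖ := by
            rw [sq]; exact mul_le_mul_of_nonneg_left hlt.le (norm_nonneg _)
        _ ≤ t ^ 2 * (2 * ‖z‖ + 3) := hR.norm_sub_mul_norm_add_le ht₀ ht₁ z
        _ ≤ ((M + 11) * t) ^ 2 := by nlinarith [mul_le_mul_of_nonneg_left hz (sq_nonneg t)]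
    exact (pow_le_pow_iff_left₀ (norm_nonneg _) (by positivity) two_ne_zero).1 hsq

end IsSqrtQuadratic

def slitStrip (b : ℝ) : Set ℂ := {z | z.im ≠ 0 ∨ (0 < z.re ∧ z.re < b)}

theorem slitStrip_subset_slitPlane (b : ℝ) : slitStrip b ⊆ slitPlane := fun _ hz ↦
  mem_slitPlane_iff.2 (hz.symm.imp_left And.left)

theorem starConvex_slitStrip {w b : ℝ} (hw : 0 < w) (hwb : w < b) :
    StarConvex ℝ (w : ℂ) (slitStrip b) := by
  intro z hz θ₀ θ hθ₀ hθ hsum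
  simp only [slitStrip, mem_ofPred_eq, add_im, add_re, smul_im, smul_re, ofReal_im, ofReal_re,
    smul_eq_mul, mul_zero, zero_add] at hz ⊢
  rcases hz with him | ⟨hre₀, hreb⟩
  · rcases hθ.eq_or_lt with rfl | hθpos
    · right
      obtain rfl : θ₀ = 1 := by linarith
      simp [hw, hwb]
    · exact Or.inl (mul_ne_zero hθpos.ne' him)
  · obtain rfl : θ₀ = 1 - θ := by linarith
    right
    constructor
    · nlinarith [mul_le_mul_of_nonneg_left (min_le_left w z.re) hθ₀,
        mul_le_mul_of_nonneg_left (min_le_right w z.re) hθ, lt_min hw hre₀]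
    · nlinarith [mul_le_mul_of_nonneg_left (le_max_left w z.re) hθ₀,
        mul_le_mul_of_nonneg_left (le_max_right w z.re) hθ, max_lt hwb hreb]

theorem tendsto_ofReal_nhdsLT_slitStrip {b : ℝ} (hb : 0 < b) :
    Tendsto ((↑) : ℝ → ℂ) (𝓝[<] b) (𝓝[slitStrip b] b) := by
  refine tendsto_nhdsWithin_iff.2 ⟨continuous_ofReal.continuousAt.tendsto.mono_left
    nhdsWithin_le_nhds, ?_⟩
  filter_upwards [Ioo_mem_nhdsLT hb] with x hx
  exact Or.inr (by simpa using hx)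

theorem exists_norm_bounds_on_segments {K : Set ℂ} (hK : IsCompact K) (hKs : K ⊆ slitPlane)
    {a b : ℝ} (ha : 0 < a) : ∃ k M : ℝ, 0 < k ∧ 0 ≤ M ∧
      ∀ w ∈ Icc a b, ∀ z ∈ K, ∀ s ∈ segment ℝ (w : ℂ) z, k ≤ ‖s‖ ∧ ‖s‖ ≤ M := by
  set T := (fun p : ℝ × ℝ × ℂ ↦ (1 - p.1) • (p.2.1 : ℂ) + p.1 • p.2.2) '' (Icc 0 1 ×ˢ Icc a b ×ˢ K)
  have hT : IsCompact T := (isCompact_Icc.prod (isCompact_Icc.prod hK)).image (by fun_prop)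
  have hT0 : 0 ∉ T := by
    rintro ⟨⟨θ, w, z⟩, ⟨⟨hθ₀, hθ₁⟩, ⟨hw, -⟩, hz⟩, h⟩
    exact slitPlane_ne_zero (starConvex_ofReal_slitPlane (ha.trans_le hw) (hKs hz)
      (by linarith) hθ₀ (by ring)) h
  have hsegT : ∀ w ∈ Icc a b, ∀ z ∈ K, segment ℝ (w : ℂ) z ⊆ T := by
    intro w hw z hz
    rw [segment_eq_image]
    rintro _ ⟨θ, hθ, rfl⟩
    exact ⟨(θ, w, z), ⟨hθ, hw, hz⟩, rfl⟩
  obtain ⟨k, hk, hkT⟩ := hT.exists_pos_forall_le_norm hT0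
  obtain ⟨M, hM, hMT⟩ := hT.isBounded.exists_pos_norm_le
  exact ⟨k, M, hk, hM.le, fun w hw z hz s hs ↦
    ⟨hkT s (hsegT w hw z hz hs), hMT s (hsegT w hw z hz hs)⟩⟩

noncomputable def limitPhase (z : ℂ) : ℂ := (z - 1 - log z) / 2

theorem hasDerivAt_limitPhase {z : ℂ} (hz : z ∈ slitPlane) :
    HasDerivAt limitPhase ((z - 1) / (2 * z)) z := by
  refine ((((hasDerivAt_id z).sub_const 1).sub (hasDerivAt_log hz)).div_const 2).congr_deriv ?_
  field_simp [slitPlane_ne_zero hz]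

theorem limitPhase_one : limitPhase 1 = 0 := by simp [limitPhase]

theorem norm_sub_limitPhase_le_of_hasDerivAt {φ R : ℂ → ℂ} {w z : ℂ} {C k : ℝ}
    (hφ : ∀ s ∈ segment ℝ w z, HasDerivAt φ (R s / (2 * s)) s)
    (hslit : segment ℝ w z ⊆ slitPlane) (hR : ∀ s ∈ segment ℝ w z, ‖R s - (s - 1)‖ ≤ C)
    (hk : 0 < k) (hks : ∀ s ∈ segment ℝ w z, k ≤ ‖s‖) :
    ‖φ z - limitPhase z‖ ≤ ‖φ w - limitPhase w‖ + C / (2 * k) * ‖z - w‖ := by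
  have hderiv : ∀ s ∈ segment ℝ w z, HasDerivWithinAt (fun u ↦ φ u - limitPhase u)
      ((R s - (s - 1)) / (2 * s)) (segment ℝ w z) s := fun s hs ↦
    ((hφ s hs).sub (hasDerivAt_limitPhase (hslit hs))).hasDerivWithinAt.congr_deriv (by ring)
  have hbound : ∀ s ∈ segment ℝ w z, ‖(R s - (s - 1)) / (2 * s)‖ ≤ C / (2 * k) := fun s hs ↦ by
    rw [norm_div, norm_mul, Complex.norm_two]
    exact div_le_div₀ ((norm_nonneg _).trans (hR s hs)) (hR s hs) (by positivity)
      (by linarith [hks s hs])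
  have hmvt := (convex_segment w z).norm_image_sub_le_of_norm_hasDerivWithin_le hderiv hbound
    (left_mem_segment ℝ w z) (right_mem_segment ℝ w z)
  linarith [norm_sub_norm_le (φ z - limitPhase z) (φ w - limitPhase w)]

theorem IsSqrtQuadratic.norm_sub_limitPhase_le {t : ℝ} {R : ℂ → ℂ} (hR : IsSqrtQuadratic t R)
    (ht₀ : 0 ≤ t) (ht₁ : t ≤ 1)
    (hcont : ∀ z ∉ branchCut t, ContinuousAt R z)
    (hinf : Tendsto (fun x : ℝ ↦ R x / x) atTop (𝓝 1)) {φ : ℂ → ℂ} {w z : ℂ} {k M : ℝ}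
    (hφ : ∀ s ∈ segment ℝ w z, HasDerivAt φ (R s / (2 * s)) s)
    (hslit : segment ℝ w z ⊆ slitPlane) (hk : 0 < k) (hM : 0 ≤ M)
    (hnorm : ∀ s ∈ segment ℝ w z, k ≤ ‖s‖ ∧ ‖s‖ ≤ M) :
    ‖φ z - limitPhase z‖ ≤ ‖φ w - limitPhase w‖ + (M + 11) * t / (2 * k) * (2 * M) := by
  refine (norm_sub_limitPhase_le_of_hasDerivAt hφ hslit
    (fun s hs ↦ hR.norm_sub_le ht₀ ht₁ hcont hinf hM (hnorm s hs).2) hk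
    (fun s hs ↦ (hnorm s hs).1)).trans ?_
  gcongr
  calc ‖z - w‖ ≤ ‖z‖ + ‖w‖ := _root_.norm_sub_le _ _
    _ ≤ 2 * M := by
      linarith [(hnorm z (right_mem_segment ℝ w z)).2, (hnorm w (left_mem_segment ℝ w z)).2]

theorem phase_function_uniform_limit (ν : ℝ) (hν : 0 < ν)
    (β₁ β₂ : ℕ → ℝ)
    (hβ₁ : ∀ n : ℕ, β₁ n = 1 + ν / n - 2 * Real.sqrt (ν / n))
    (hβ₂ : ∀ n : ℕ, β₂ n = 1 + ν / n + 2 * Real.sqrt (ν / n))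
    (R φ : ℕ → ℂ → ℂ)
    (hRsq : ∀ (n : ℕ) (z : ℂ), R n z ^ 2 = (z - (β₁ n : ℂ)) * (z - (β₂ n : ℂ)))
    (hRan : ∀ (n : ℕ) (z : ℂ), ¬(z.im = 0 ∧ β₁ n ≤ z.re ∧ z.re ≤ β₂ n) →
      AnalyticAt ℂ (R n) z)
    (hRnorm : ∀ n : ℕ, Tendsto (fun x : ℝ => R n (x : ℂ) / (x : ℂ)) atTop (𝓝 1))
    (S : ℕ → Set ℂ)
    (hS : ∀ n : ℕ, S n = {z : ℂ | z.im ≠ 0 ∨ (0 < z.re ∧ z.re < β₁ n)})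
    (hφderiv : ∀ n : ℕ, ∀ z ∈ S n, HasDerivAt (φ n) (R n z / (2 * z)) z)
    (hφ0 : ∀ n : ℕ, Tendsto (φ n) (𝓝[S n] (β₁ n : ℂ)) (𝓝 0))
    (K : Set ℂ) (hK : IsCompact K) (hKS : ∀ n : ℕ, K ⊆ S n) :
    TendstoUniformlyOn (fun n z => φ n z)
      (fun z => (z - 1 - Complex.log z) / 2) atTop K := by
  obtain rfl : S = fun n ↦ slitStrip (β₁ n) := funext hS
  set t : ℕ → ℝ := fun n ↦ √(ν / n)
  have ht : Tendsto t atTop (𝓝 0) := by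
    simpa only [Real.sqrt_zero] using (tendsto_const_div_atTop_nhds_zero_nat ν).sqrt
  have hβ₁t : ∀ n, β₁ n = (1 - t n) ^ 2 := fun n ↦
    (hβ₁ n).trans (one_add_sub_two_mul_sqrt (by positivity))
  have hβ₂t : ∀ n, β₂ n = (1 + t n) ^ 2 := fun n ↦
    (hβ₂ n).trans (one_add_add_two_mul_sqrt (by positivity))
  have hR : ∀ n, IsSqrtQuadratic (t n) (R n) := fun n z ↦ by
    rw [← hβ₁t, ← hβ₂t]; exact hRsq n z
  have hRcont : ∀ n, ∀ z ∉ branchCut (t n), ContinuousAt (R n) z := fun n z hz ↦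
    (hRan n z (by rwa [hβ₁t, hβ₂t])).continuousAt
  have hβlim : Tendsto β₁ atTop (𝓝 1) := by
    rw [funext hβ₁t]
    simpa using ((tendsto_const_nhds (x := (1 : ℝ))).sub ht).pow 2
  obtain ⟨k, M, hk, hM, hbounds⟩ := exists_norm_bounds_on_segments hK
    ((hKS 0).trans (slitStrip_subset_slitPlane _)) (a := 1 / 2) (b := 2) (by norm_num)
  obtain ⟨w, hw, hwβ, hφw⟩ := exists_seq_tendsto_of_tendsto_nhdsLT (f := fun n x ↦ φ n x) hβlim
    ((hβlim.eventually (lt_mem_nhds one_pos)).mono fun n hn ↦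
      (hφ0 n).comp (tendsto_ofReal_nhdsLT_slitStrip hn))
  have hψw : Tendsto (fun n ↦ limitPhase (w n)) atTop (𝓝 0) := by
    simpa [limitPhase_one, Function.comp_def] using
      (hasDerivAt_limitPhase one_mem_slitPlane).continuousAt.tendsto.comp hw.ofReal
  show TendstoUniformlyOn _ limitPhase _ _
  refine tendstoUniformlyOn_of_eventually_dist_le
    (b := fun n ↦ ‖φ n (w n) - limitPhase (w n)‖ + (M + 11) * t n / (2 * k) * (2 * M))
    (by simpa using (hφw.sub hψw).norm.add ((ht.const_mul _).div_const _ |>.mul_const _)) ?_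
  filter_upwards [ht.eventually (ge_mem_nhds one_pos), hw.eventually (Icc_mem_nhds
    (by norm_num : (1 / 2 : ℝ) < 1) (by norm_num : (1 : ℝ) < 2)), hwβ] with n ht₁ hwI hwβn z hz
  have hseg := (starConvex_slitStrip (by linarith [hwI.1]) hwβn).segment_subset (hKS n hz)
  rw [dist_comm, dist_eq_norm]
  exact (hR n).norm_sub_limitPhase_le (Real.sqrt_nonneg _) ht₁ (hRcont n) (hRnorm n)
    (fun s hs ↦ hφderiv n s (hseg hs)) (hseg.trans (slitStrip_subset_slitPlane _)) hk hM
    (hbounds _ hwI z hz)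
end
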